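/- arXiv:0806.3810 — 3 statements merged into one kernel-verified Lean document; each statement's English description precedes it below -/
import Mathlib

section
/- In the same matrix setting, for every X ∈ ℝⁿ the vector l·X lies in K = ker(a) and m·X lies in H = {ζ : ᵗξ·g·ζ = 0}; moreover K and H are complementary subspaces of ℝⁿ: K ∩ H = {0} and K + H = ℝⁿ, and g(ξ',ζ) = 0 for all ξ' ∈ K, ζ ∈ H. -/
/-! Since `η * ξ = 1`, the matrix `l = ξ * η` is the idempotent projecting onto `range ξ` along
`ker η`; and `K = range ξ` because `a * ξ = 0` while every vector of `ker a` is of the form `ξ c`.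
Orthogonality is `(ξ c) ⬝ᵥ g ζ = c ⬝ᵥ η ζ`. -/

open Matrix LinearMap

namespace LinearMap

variable {R V W : Type*} [Ring R] [AddCommGroup V] [Module R V] [AddCommGroup W] [Module R W]

theorem isCompl_range_ker_of_comp_eq_id {f : V →ₗ[R] W} {g : W →ₗ[R] V} (h : g ∘ₗ f = id) :
    IsCompl (range f) (ker g) := by
  have hidem : IsIdempotentElem (f ∘ₗ g) := by
    rw [IsIdempotentElem, Module.End.mul_eq_comp, comp_assoc, ← comp_assoc g, h, id_comp]
  have hrange : range (f ∘ₗ g) = range f :=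
    range_comp_of_range_eq_top f (range_eq_top_of_surjective g fun v => ⟨f v, congr($h v)⟩)
  have hker : ker (f ∘ₗ g) = ker g := ker_comp_of_ker_eq_bot g (ker_eq_bot_of_inverse h)
  simpa only [hrange, hker] using hidem.isCompl

end LinearMap

namespace Matrix

variable {R m k : Type*} [CommRing R] [Fintype m] [Fintype k]

theorem isCompl_range_mulVecLin_ker_mulVecLin [DecidableEq k] {ξ : Matrix m k R} {η : Matrix k m R}
    (h : η * ξ = 1) : IsCompl (range ξ.mulVecLin) (ker η.mulVecLin) :=
  isCompl_range_ker_of_comp_eq_id <| by rw [← mulVecLin_mul, h, mulVecLin_one]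

theorem mulVec_dotProduct_mulVec (ξ : Matrix m k R) (g : Matrix m m R) (c : k → R) (v : m → R) :
    ξ *ᵥ c ⬝ᵥ g *ᵥ v = c ⬝ᵥ (ξᵀ * g) *ᵥ v := by
  rw [dotProduct_mulVec, vecMul_mulVec, ← dotProduct_mulVec]

end Matrix

theorem K_H_complementary_general
    {n k : ℕ} (g a : Matrix (Fin n) (Fin n) ℝ) (ξ : Matrix (Fin n) (Fin k) ℝ)
    (haξ : a * ξ = 0) (hortho : ξᵀ * g * ξ = 1)
    (hker : ∀ v : Fin n → ℝ, a.mulVec v = 0 → ∃ c : Fin k → ℝ, v = ξ.mulVec c)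
    (η : Matrix (Fin k) (Fin n) ℝ) (hη : η = ξᵀ * g)
    (l m : Matrix (Fin n) (Fin n) ℝ) (hl : l = ξ * η) (hm : m = 1 - l)
    (K H : Submodule ℝ (Fin n → ℝ))
    (hK : K = LinearMap.ker a.mulVecLin)
    (hH : H = LinearMap.ker η.mulVecLin) :
    (∀ X : Fin n → ℝ, l.mulVec X ∈ K ∧ m.mulVec X ∈ H) ∧
      K ⊓ H = ⊥ ∧ K ⊔ H = ⊤ ∧
      (∀ ξ' ∈ K, ∀ ζ ∈ H, ξ' ⬝ᵥ g.mulVec ζ = 0) := by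
  have hηξ : η * ξ = 1 := hη ▸ hortho
  have hK_range : K = range ξ.mulVecLin := by
    refine hK ▸ le_antisymm (fun v hv => ?_) (range_le_ker_iff.2 ?_)
    · obtain ⟨c, rfl⟩ := hker v hv
      exact ⟨c, rfl⟩
    · rw [← mulVecLin_mul, haξ, mulVecLin_zero]
  have hcompl : IsCompl K H := hK_range ▸ hH ▸ isCompl_range_mulVecLin_ker_mulVecLin hηξ
  refine ⟨fun X => ⟨?_, ?_⟩, hcompl.inf_eq_bot, hcompl.sup_eq_top, ?_⟩
  · rw [hK_range, hl, ← mulVec_mulVec]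
    exact ⟨η *ᵥ X, rfl⟩
  · rw [hH, mem_ker, mulVecLin_apply, hm, hl, mulVec_mulVec, Matrix.mul_sub, ← Matrix.mul_assoc,
      hηξ, Matrix.mul_one, Matrix.one_mul, sub_self, zero_mulVec]
  · rintro _ hξ' ζ hζ
    obtain ⟨c, rfl⟩ := hK_range ▸ hξ'
    rw [hH, mem_ker, mulVecLin_apply, hη] at hζ
    rw [mulVecLin_apply, mulVec_dotProduct_mulVec, hζ, dotProduct_zero]

theorem K_H_complementary
    {n k : ℕ} (g a : Matrix (Fin n) (Fin n) ℝ) (ξ : Matrix (Fin n) (Fin k) ℝ)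
    (hg : g.IsSymm) (hginv : IsUnit g.det)
    (ha : aᵀ = -a) (hrank : a.rank = n - k)
    (haξ : a * ξ = 0) (hortho : ξᵀ * g * ξ = 1)
    (hker : ∀ v : Fin n → ℝ, a.mulVec v = 0 → ∃ c : Fin k → ℝ, v = ξ.mulVec c)
    (η : Matrix (Fin k) (Fin n) ℝ) (hη : η = ξᵀ * g)
    (l m : Matrix (Fin n) (Fin n) ℝ) (hl : l = ξ * η) (hm : m = 1 - l)
    (K H : Submodule ℝ (Fin n → ℝ))
    (hK : K = LinearMap.ker a.mulVecLin)
    (hH : H = LinearMap.ker η.mulVecLin) :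
    (∀ X : Fin n → ℝ, l.mulVec X ∈ K ∧ m.mulVec X ∈ H) ∧
      K ⊓ H = ⊥ ∧ K ⊔ H = ⊤ ∧
      (∀ ξ' ∈ K, ∀ ζ ∈ H, ξ' ⬝ᵥ g.mulVec ζ = 0) :=
  K_H_complementary_general g a ξ haξ hortho hker η hη l m hl hm K H hK hH
end

section
/- Let l be an n×n projector (l² = l) and a, ǎ matrices such that the operators on (1,2)-tensors Φ^± defined by (Φ^±)^{ir}_{sj} = ½(δ^i_s δ^r_j ± (l^i_s l^r_j + a_{sj} ǎ^{ir})) satisfy the structure conditions a·l = 0, l·ǎ = 0, ǎ·a = ᵗm, a·ǎ = m-type relations with m = 1 − l. Define θ^{ir}_{sj} = ½(l^i_s m^r_j + m^i_s l^r_j). Then Φ⁻ + Φ⁺ = Id, (Φ^±)² = Φ^± − ½θ, and Φ⁻∘Φ⁺ = Φ⁺∘Φ⁻ = ½θ. -/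
open Matrix

/-- Skew Obata operator `(Φ^± X)^i_{jk} = ½(X^i_{jk} ± Σ_{s,r}(l^i_s l^r_j + a_{sj} ǎ^{ir}) X^s_{rk})`,
where `ac` stands for the matrix `ǎ` with upper indices. -/
noncomputable def PhiOp {n : ℕ} (ε : ℝ) (l a ac : Matrix (Fin n) (Fin n) ℝ)
    (X : Fin n → Fin n → Fin n → ℝ) : Fin n → Fin n → Fin n → ℝ :=
  fun i j k => (1/2) * (X i j k + ε * ∑ s, ∑ r, (l i s * l r j + a s j * ac i r) * X s r k)

/-- `θ^{ir}_{sj} = ½(l^i_s m^r_j + m^i_s l^r_j)` acting on (1,2)-tensors. -/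
noncomputable def ThetaOp {n : ℕ} (l m : Matrix (Fin n) (Fin n) ℝ)
    (X : Fin n → Fin n → Fin n → ℝ) : Fin n → Fin n → Fin n → ℝ :=
  fun i j k => (1/2) * ∑ s, ∑ r, (l i s * m r j + m i s * l r j) * X s r k

section Aux

variable {n : ℕ}

lemma sumAB (A B Y : Matrix (Fin n) (Fin n) ℝ) (i j : Fin n) :
    ∑ s, ∑ r, A i s * B r j * Y s r = (A * Y * B) i j := by
  simp only [Matrix.mul_apply, Finset.sum_mul]
  rw [Finset.sum_comm]
  exact Finset.sum_congr rfl fun s _ => Finset.sum_congr rfl fun r _ => by ring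

lemma sumT (A B Y : Matrix (Fin n) (Fin n) ℝ) (i j : Fin n) :
    ∑ s, ∑ r, B s j * A i r * Y s r = (A * Yᵀ * B) i j := by
  simp only [Matrix.mul_apply, Matrix.transpose_apply, Finset.sum_mul]
  exact Finset.sum_congr rfl fun s _ => Finset.sum_congr rfl fun r _ => by ring

/-- The operator `P : Y ↦ l Y l + ǎ Yᵀ a`. -/
def PMat (l a ac Y : Matrix (Fin n) (Fin n) ℝ) : Matrix (Fin n) (Fin n) ℝ :=
  l * Y * l + ac * Yᵀ * a

lemma kernel_sum (l a ac Y : Matrix (Fin n) (Fin n) ℝ) (i j : Fin n) :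
    ∑ s, ∑ r, (l i s * l r j + a s j * ac i r) * Y s r = PMat l a ac Y i j := by
  simp only [add_mul, Finset.sum_add_distrib, PMat, Matrix.add_apply]
  rw [sumAB, sumT]

lemma theta_sum (l m Y : Matrix (Fin n) (Fin n) ℝ) (i j : Fin n) :
    ∑ s, ∑ r, (l i s * m r j + m i s * l r j) * Y s r = (l * Y * m + m * Y * l) i j := by
  simp only [add_mul, Finset.sum_add_distrib, Matrix.add_apply]
  rw [sumAB, sumAB]

lemma PMat_add (l a ac Y Z : Matrix (Fin n) (Fin n) ℝ) :
    PMat l a ac (Y + Z) = PMat l a ac Y + PMat l a ac Z := by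
  simp only [PMat, Matrix.transpose_add, Matrix.mul_add, Matrix.add_mul]
  abel

lemma PMat_smul (l a ac Y : Matrix (Fin n) (Fin n) ℝ) (c : ℝ) :
    PMat l a ac (c • Y) = c • PMat l a ac Y := by
  simp only [PMat, Matrix.transpose_smul, Matrix.mul_smul, Matrix.smul_mul, smul_add]

/-- key derived identity `ǎ a = m` via a rank argument. -/
lemma ca_eq (l m a ac : Matrix (Fin n) (Fin n) ℝ)
    (hl : l * l = l) (hm : m = 1 - l) (ha : aᵀ = -a) (hal : a * l = 0)
    (hlac : l * ac = 0) (haac : a * ac = mᵀ) : ac * a = m := by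
  classical
  have hlta : lᵀ * a = 0 := by
    have h1 : (a * l)ᵀ = 0 := by rw [hal, Matrix.transpose_zero]
    rw [Matrix.transpose_mul, ha, Matrix.mul_neg] at h1
    exact neg_eq_zero.mp h1
  have hma : mᵀ * a = a := by
    rw [hm, Matrix.transpose_sub, Matrix.transpose_one, Matrix.sub_mul, Matrix.one_mul,
      hlta, sub_zero]
  -- ranks
  have hrm : m.rank ≤ a.rank := by
    calc m.rank = mᵀ.rank := (Matrix.rank_transpose m).symm
      _ = (a * ac).rank := by rw [haac]
      _ ≤ a.rank := Matrix.rank_mul_le_left a ac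
  have hrlm : n ≤ l.rank + m.rank := by
    have h1 : l + m = 1 := by rw [hm]; abel
    have h3 : (l + m).rank ≤ l.rank + m.rank := by
      have hr : LinearMap.range (l + m).mulVecLin ≤
          LinearMap.range l.mulVecLin ⊔ LinearMap.range m.mulVecLin := by
        rintro x ⟨y, rfl⟩
        rw [Matrix.mulVecLin_add]
        exact Submodule.add_mem_sup ⟨y, rfl⟩ ⟨y, rfl⟩
      calc (l + m).rank
          ≤ Module.finrank ℝ ↥(LinearMap.range l.mulVecLin ⊔ LinearMap.range m.mulVecLin) :=
            Submodule.finrank_mono hr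
        _ ≤ l.rank + m.rank := Submodule.finrank_add_le_finrank_add_finrank _ _
    have h2 : (l + m).rank = n := by
      rw [h1, Matrix.rank_one, Fintype.card_fin]
    omega
  have hrn := LinearMap.finrank_range_add_finrank_ker a.mulVecLin
  have hfinV : Module.finrank ℝ (Fin n → ℝ) = n := by simp
  rw [hfinV] at hrn
  -- ker a = range l
  have hle : LinearMap.range l.mulVecLin ≤ LinearMap.ker a.mulVecLin := by
    rintro x ⟨y, rfl⟩
    simp only [LinearMap.mem_ker, Matrix.mulVecLin_apply, Matrix.mulVec_mulVec, hal,
      Matrix.zero_mulVec]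
  have hfr : Module.finrank ℝ ↥(LinearMap.ker a.mulVecLin) ≤
      Module.finrank ℝ ↥(LinearMap.range l.mulVecLin) := by
    have h1 : Module.finrank ℝ ↥(LinearMap.range l.mulVecLin) = l.rank := rfl
    have h2 : Module.finrank ℝ ↥(LinearMap.range a.mulVecLin) = a.rank := rfl
    omega
  have heq : LinearMap.range l.mulVecLin = LinearMap.ker a.mulVecLin :=
    Submodule.eq_of_le_of_finrank_le hle hfr
  have key : ∀ v : Fin n → ℝ, a.mulVec v = 0 → l.mulVec v = v := by
    intro v hv
    have hvmem : v ∈ LinearMap.range l.mulVecLin := by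
      rw [heq]; exact LinearMap.mem_ker.mpr hv
    obtain ⟨z, hz⟩ := hvmem
    simp only [Matrix.mulVecLin_apply] at hz
    calc l.mulVec v = l.mulVec (l.mulVec z) := by rw [hz]
      _ = (l * l).mulVec z := Matrix.mulVec_mulVec ..
      _ = l.mulVec z := by rw [hl]
      _ = v := hz
  set P : Matrix (Fin n) (Fin n) ℝ := ac * a + l with hP
  have haP : a * P = a := by
    rw [hP, Matrix.mul_add, ← Matrix.mul_assoc, haac, hal, add_zero, hma]
  have hlP : l * P = l := by
    rw [hP, Matrix.mul_add, ← Matrix.mul_assoc, hlac, Matrix.zero_mul, hl, zero_add]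
  have hPv : ∀ x : Fin n → ℝ, P.mulVec x = x := by
    intro x
    have h1 : a.mulVec (P.mulVec x - x) = 0 := by
      rw [Matrix.mulVec_sub, Matrix.mulVec_mulVec, haP, sub_self]
    have h2 := key _ h1
    have h3 : l.mulVec (P.mulVec x - x) = 0 := by
      rw [Matrix.mulVec_sub, Matrix.mulVec_mulVec, hlP, sub_self]
    have h4 : P.mulVec x - x = 0 := by rw [← h2, h3]
    exact sub_eq_zero.mp h4
  have hP1 : P = 1 := by
    ext i j
    have h := congrFun (hPv (Pi.single j 1)) i
    rw [Matrix.mulVec_single_one] at h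
    simpa [Matrix.one_apply, Pi.single_apply, eq_comm] using h
  have : ac * a = P - l := by rw [hP, add_sub_cancel_right]
  rw [this, hP1, ← hm]

lemma PMat_PMat (l m a ac Y : Matrix (Fin n) (Fin n) ℝ)
    (hl : l * l = l) (hm : m = 1 - l) (ha : aᵀ = -a) (hal : a * l = 0)
    (hlac : l * ac = 0) (haac : a * ac = mᵀ) :
    PMat l a ac (PMat l a ac Y) = Y - (l * Y * m + m * Y * l) := by
  have hca : ac * a = m := ca_eq l m a ac hl hm ha hal hlac haac
  have hlta : lᵀ * a = 0 := by
    have h1 : (a * l)ᵀ = 0 := by rw [hal, Matrix.transpose_zero]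
    rw [Matrix.transpose_mul, ha, Matrix.mul_neg] at h1
    exact neg_eq_zero.mp h1
  have hacat : ac * aᵀ = -m := by rw [ha, Matrix.mul_neg, hca]
  have hacta : acᵀ * a = -m := by
    have h1 : aᵀ * ac = -mᵀ := by rw [ha, Matrix.neg_mul, haac]
    have h2 := congrArg Matrix.transpose h1
    simpa [Matrix.transpose_mul] using h2
  have hmsum : l + m = 1 := by rw [hm]; abel
  have expand : PMat l a ac (PMat l a ac Y) = l * Y * l + m * Y * m := by
    simp only [PMat, Matrix.transpose_add, Matrix.transpose_mul, Matrix.transpose_transpose,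
      Matrix.mul_add, Matrix.add_mul]
    have t1' : l * (l * Y * l) * l = l * Y * l := by
      rw [show l * (l * Y * l) * l = l * l * (Y * (l * l)) by simp only [Matrix.mul_assoc], hl,
        ← Matrix.mul_assoc]
    have t2 : l * (ac * Yᵀ * a) * l = 0 := by
      rw [show l * (ac * Yᵀ * a) = l * ac * (Yᵀ * a) by simp only [Matrix.mul_assoc], hlac]
      simp
    have t3 : ac * (lᵀ * Yᵀ * lᵀ) * a = 0 := by
      rw [show ac * (lᵀ * Yᵀ * lᵀ) * a = ac * (lᵀ * (Yᵀ * (lᵀ * a))) by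
        simp only [Matrix.mul_assoc], hlta]
      simp
    have t4 : ac * (aᵀ * Y * acᵀ) * a = m * Y * m := by
      rw [show ac * (aᵀ * Y * acᵀ) * a = ac * aᵀ * (Y * (acᵀ * a)) by
        simp only [Matrix.mul_assoc], hacta, hacat]
      simp [Matrix.mul_assoc]
    rw [show ac * (lᵀ * (Yᵀ * lᵀ)) * a = ac * (lᵀ * Yᵀ * lᵀ) * a by
        simp only [Matrix.mul_assoc],
      show ac * (aᵀ * (Y * acᵀ)) * a = ac * (aᵀ * Y * acᵀ) * a by
        simp only [Matrix.mul_assoc], t3, t4]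
    rw [show l * (l * Y * l) * l + l * (ac * Yᵀ * a) * l = l * Y * l by
      rw [t1', t2, add_zero]]
    abel
  rw [expand]
  have total : l * Y * l + l * Y * m + m * Y * l + m * Y * m = Y := by
    have : (l + m) * Y * (l + m) = Y := by rw [hmsum]; simp
    calc l * Y * l + l * Y * m + m * Y * l + m * Y * m
        = (l + m) * Y * (l + m) := by
          simp only [Matrix.add_mul, Matrix.mul_add]; abel
      _ = Y := this
  have goal2 : l * Y * l + m * Y * m + (l * Y * m + m * Y * l)
      = l * Y * l + l * Y * m + m * Y * l + m * Y * m := by abel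
  rw [eq_sub_iff_add_eq, goal2, total]

lemma phi_apply (ε : ℝ) (l a ac : Matrix (Fin n) (Fin n) ℝ)
    (X : Fin n → Fin n → Fin n → ℝ) (i j k : Fin n) :
    PhiOp ε l a ac X i j k
      = (1/2) * (X i j k + ε * PMat l a ac (Matrix.of fun s r => X s r k) i j) := by
  rw [PhiOp, ← kernel_sum]
  rfl

lemma theta_apply (l m : Matrix (Fin n) (Fin n) ℝ)
    (X : Fin n → Fin n → Fin n → ℝ) (i j k : Fin n) :
    ThetaOp l m X i j k
      = (1/2) * ((l * (Matrix.of fun s r => X s r k) * m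
          + m * (Matrix.of fun s r => X s r k) * l) i j) := by
  rw [ThetaOp, ← theta_sum]
  rfl

lemma inner_matrix (ε : ℝ) (l a ac : Matrix (Fin n) (Fin n) ℝ)
    (X : Fin n → Fin n → Fin n → ℝ) (k : Fin n) :
    (Matrix.of fun s r => PhiOp ε l a ac X s r k)
      = (1/2 : ℝ) • ((Matrix.of fun s r => X s r k)
          + ε • PMat l a ac (Matrix.of fun s r => X s r k)) := by
  ext s r
  rw [Matrix.of_apply, phi_apply]
  simp [mul_add]

lemma phi_comp (ε ε' : ℝ) (l m a ac : Matrix (Fin n) (Fin n) ℝ)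
    (hl : l * l = l) (hm : m = 1 - l) (ha : aᵀ = -a) (hal : a * l = 0)
    (hlac : l * ac = 0) (haac : a * ac = mᵀ)
    (X : Fin n → Fin n → Fin n → ℝ) (i j k : Fin n) :
    PhiOp ε l a ac (PhiOp ε' l a ac X) i j k
      = (1/4) * ((1 + ε * ε') * X i j k
          + (ε + ε') * PMat l a ac (Matrix.of fun s r => X s r k) i j
          - ε * ε' * (l * (Matrix.of fun s r => X s r k) * m
              + m * (Matrix.of fun s r => X s r k) * l) i j) := by
  set Y : Matrix (Fin n) (Fin n) ℝ := Matrix.of fun s r => X s r k with hY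
  rw [phi_apply, inner_matrix, PMat_smul, PMat_add, PMat_smul,
    PMat_PMat l m a ac Y hl hm ha hal hlac haac, phi_apply]
  simp only [Matrix.smul_apply, Matrix.add_apply, Matrix.sub_apply, smul_eq_mul, ← hY]
  have hYX : Y i j = X i j k := rfl
  rw [hYX]
  ring

end Aux

theorem phi_operator_relations
    {n : ℕ} (l m a ac : Matrix (Fin n) (Fin n) ℝ)
    (hl : l * l = l) (hm : m = 1 - l)
    (ha : aᵀ = -a) (hal : a * l = 0) (hlac : l * ac = 0) (haac : a * ac = mᵀ) :
    (∀ X : Fin n → Fin n → Fin n → ℝ, PhiOp (-1) l a ac X + PhiOp 1 l a ac X = X) ∧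
    (∀ X : Fin n → Fin n → Fin n → ℝ,
      PhiOp 1 l a ac (PhiOp 1 l a ac X) = PhiOp 1 l a ac X - ((1/2 : ℝ)) • ThetaOp l m X) ∧
    (∀ X : Fin n → Fin n → Fin n → ℝ,
      PhiOp (-1) l a ac (PhiOp (-1) l a ac X) = PhiOp (-1) l a ac X - ((1/2 : ℝ)) • ThetaOp l m X) ∧
    (∀ X : Fin n → Fin n → Fin n → ℝ,
      PhiOp (-1) l a ac (PhiOp 1 l a ac X) = ((1/2 : ℝ)) • ThetaOp l m X) ∧
    (∀ X : Fin n → Fin n → Fin n → ℝ,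
      PhiOp 1 l a ac (PhiOp (-1) l a ac X) = ((1/2 : ℝ)) • ThetaOp l m X) := by
  refine ⟨?_, ?_, ?_, ?_, ?_⟩
  · intro X
    funext i j k
    simp only [Pi.add_apply, PhiOp]
    ring
  all_goals {
    intro X
    funext i j k
    rw [phi_comp _ _ l m a ac hl hm ha hal hlac haac]
    simp only [Pi.sub_apply, Pi.smul_apply, smul_eq_mul, phi_apply, theta_apply]
    ring
  }
end

section
/- Miron's characterization (algebraic core): a deformation tensor B (a (1,2)-tensor, for fixed lower index k viewed as a matrix B^i_j) satisfies the metric-compatibility equation g_{sj} B^s_i + g_{is} B^s_j = H_{ij} (for given symmetric H) if and only if B = B₀ + ⁻O X for some (1,2)-tensor X, where B₀^i_j = ½ g^{im} H_{mj} is a particular solution and ⁻O is the Obata projector (⁻O X)^i_j = ½(X^i_j − g_{sj} g^{ih} X^s_h). -/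
open Matrix

/-- Miron's characterization, algebraic core: `B` solves the metricity equation
`g·B + ᵗB·g = H` iff `B` is the particular solution `½ g⁻¹ H` plus an element of the image
of the Obata projector `⁻O X = ½(X − g⁻¹ ᵗX g)`. -/
theorem miron_characterization
    {n : ℕ} (g H : Matrix (Fin n) (Fin n) ℝ)
    (hg : g.IsSymm) (hginv : IsUnit g.det) (hH : H.IsSymm)
    (B : Matrix (Fin n) (Fin n) ℝ) :
    g * B + Bᵀ * g = H ↔
      ∃ X : Matrix (Fin n) (Fin n) ℝ,
        B = (1/2 : ℝ) • (g⁻¹ * H) + (1/2 : ℝ) • (X - g⁻¹ * Xᵀ * g) := by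
  have hgg : g * g⁻¹ = 1 := Matrix.mul_nonsing_inv g hginv
  have hgg' : g⁻¹ * g = 1 := Matrix.nonsing_inv_mul g hginv
  have hginvsymm : g⁻¹ᵀ = g⁻¹ := by
    rw [Matrix.transpose_nonsing_inv, hg.eq]
  constructor
  · intro h
    refine ⟨B, ?_⟩
    have hgiH : g⁻¹ * H = B + g⁻¹ * Bᵀ * g := by
      rw [← h]
      rw [Matrix.mul_add, ← Matrix.mul_assoc, ← Matrix.mul_assoc, hgg', Matrix.one_mul]
    rw [hgiH]
    ext i j
    simp [Matrix.add_apply, Matrix.sub_apply]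
    ring
  · rintro ⟨X, rfl⟩
    have ht : ((1/2 : ℝ) • (g⁻¹ * H) + (1/2 : ℝ) • (X - g⁻¹ * Xᵀ * g))ᵀ
        = (1/2 : ℝ) • (Hᵀ * g⁻¹) + (1/2 : ℝ) • (Xᵀ - g * X * g⁻¹) := by
      simp [Matrix.transpose_add, Matrix.transpose_smul, Matrix.transpose_sub,
        Matrix.transpose_mul, hginvsymm, hg.eq, Matrix.mul_assoc]
    rw [ht]
    rw [Matrix.mul_add, Matrix.add_mul, Matrix.mul_smul, Matrix.smul_mul,
      Matrix.mul_smul, Matrix.smul_mul]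
    rw [← Matrix.mul_assoc g g⁻¹ H, hgg, Matrix.one_mul]
    rw [Matrix.mul_sub, Matrix.sub_mul]
    rw [show g * (g⁻¹ * Xᵀ * g) = Xᵀ * g by
      rw [← Matrix.mul_assoc, ← Matrix.mul_assoc, hgg, Matrix.one_mul]]
    rw [show g * X * g⁻¹ * g = g * X by
      rw [Matrix.mul_assoc, hgg', Matrix.mul_one]]
    rw [hH.eq, Matrix.mul_assoc H g⁻¹ g, hgg', Matrix.mul_one]
    ext i j
    simp [Matrix.add_apply, Matrix.sub_apply]
    ring
end
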